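/- arXiv:1505.01462 — 3 statements merged into one kernel-verified Lean document; each statement's English description precedes it below -/
import Mathlib

section
/- Let L be a symmetric positive semidefinite d×d real matrix, and let u, v ∈ ℝ^d be vectors such that u is orthogonal to the nullspace of L or v is orthogonal to the nullspace of L. Then |⟨u, v⟩| ≤ √(uᵀ L† u) · √(vᵀ L v), where L† is the Moore–Penrose pseudo-inverse of L. -/
/-!
Set `P = L† L`. For symmetric `L`, `L†ᵀ` is again a Moore–Penrose inverse of `L`, so by
uniqueness `L†` is symmetric. Then `P` is the orthogonal projection onto the orthogonal
complement of the nullspace of `L`, so whichever of `u`, `v` lies there is fixed by `P`, and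
`⟨u, v⟩ = ⟨u, P v⟩ = (L† u)ᵀ L v`. Cauchy–Schwarz for the semi-inner product
`(x, y) ↦ xᵀ L y` bounds this by `‖L† u‖_L ‖v‖_L`, and `‖L† u‖_L² = uᵀ L† L L† u = uᵀ L† u`.
-/

open Matrix

namespace Matrix

variable {m n R : Type*} [Fintype m] [Fintype n]

lemma IsSymm.mulVec_dotProduct [CommSemiring R] {P : Matrix n n R} (hP : P.IsSymm)
    (x y : n → R) : P *ᵥ x ⬝ᵥ y = x ⬝ᵥ P *ᵥ y := by
  rw [dotProduct_mulVec, ← vecMul_transpose, hP.eq]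

lemma PosSemidef.abs_dotProduct_mulVec_le {L : Matrix n n ℝ} (hL : L.PosSemidef)
    (x y : n → ℝ) : |x ⬝ᵥ L *ᵥ y| ≤ √(x ⬝ᵥ L *ᵥ x) * √(y ⬝ᵥ L *ᵥ y) := by
  let _ := L.toSeminormedAddCommGroup hL
  let _ := L.toInnerProductSpace hL
  rw [dotProduct_comm x, dotProduct_comm x, dotProduct_comm y]
  exact abs_real_inner_le_norm x y

structure IsMoorePenroseInverse [CommSemiring R] (A : Matrix m n R) (X : Matrix n m R) :
    Prop where
  mul_inv_mul : A * X * A = A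
  inv_mul_inv : X * A * X = X
  isSymm_mul_inv : (A * X).IsSymm
  isSymm_inv_mul : (X * A).IsSymm

namespace IsMoorePenroseInverse

section CommSemiring

variable [CommSemiring R] {A : Matrix m n R} {X Y : Matrix n m R}

lemma transpose (h : A.IsMoorePenroseInverse X) : Aᵀ.IsMoorePenroseInverse Xᵀ where
  mul_inv_mul := by rw [← transpose_mul, ← transpose_mul, ← Matrix.mul_assoc, h.mul_inv_mul]
  inv_mul_inv := by rw [← transpose_mul, ← transpose_mul, ← Matrix.mul_assoc, h.inv_mul_inv]
  isSymm_mul_inv := by rw [← transpose_mul]; exact h.isSymm_inv_mul.transpose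
  isSymm_inv_mul := by rw [← transpose_mul]; exact h.isSymm_mul_inv.transpose

lemma eq_mul_mul (hX : A.IsMoorePenroseInverse X) (hY : A.IsMoorePenroseInverse Y) :
    X = X * A * Y :=
  calc X = X * (A * X)ᵀ := by rw [hX.isSymm_mul_inv.eq, ← Matrix.mul_assoc, hX.inv_mul_inv]
    _ = X * (A * Y * (A * X))ᵀ := by rw [← Matrix.mul_assoc, hY.mul_inv_mul]
    _ = X * (A * X)ᵀ * (A * Y)ᵀ := by rw [transpose_mul, Matrix.mul_assoc]
    _ = X * A * Y := by
      rw [hX.isSymm_mul_inv.eq, hY.isSymm_mul_inv.eq]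
      simp only [← Matrix.mul_assoc, hX.inv_mul_inv]

lemma unique (hX : A.IsMoorePenroseInverse X) (hY : A.IsMoorePenroseInverse Y) : X = Y := by
  have hYt : Yᵀ = Yᵀ * Aᵀ * Xᵀ := hY.transpose.eq_mul_mul hX.transpose
  rw [hX.eq_mul_mul hY]
  apply transpose_injective
  rw [hYt, transpose_mul, transpose_mul, Matrix.mul_assoc]

lemma isSymm {A X : Matrix n n R} (hA : A.IsSymm) (h : A.IsMoorePenroseInverse X) :
    X.IsSymm := by
  have hXt := h.transpose
  rw [hA.eq] at hXt
  exact hXt.unique h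

end CommSemiring

lemma mul_mulVec_eq_self [CommRing R] [LinearOrder R] [IsStrictOrderedRing R]
    {A : Matrix m n R} {X : Matrix n m R} (h : A.IsMoorePenroseInverse X) {x : n → R}
    (hx : ∀ w, A *ᵥ w = 0 → x ⬝ᵥ w = 0) : (X * A) *ᵥ x = x := by
  set r := x - (X * A) *ᵥ x with hr
  have hAr : A *ᵥ r = 0 := by
    rw [hr, mulVec_sub, mulVec_mulVec, ← Matrix.mul_assoc, h.mul_inv_mul, sub_self]
  have hrr : r ⬝ᵥ r = 0 :=
    calc r ⬝ᵥ r = x ⬝ᵥ r - x ⬝ᵥ X *ᵥ (A *ᵥ r) := by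
          rw [hr, sub_dotProduct, mulVec_mulVec, h.isSymm_inv_mul.mulVec_dotProduct, ← hr]
      _ = 0 := by rw [hx r hAr, hAr, mulVec_zero, dotProduct_zero, sub_zero]
  exact (sub_eq_zero.mp (dotProduct_self_eq_zero.mp hrr)).symm

end IsMoorePenroseInverse

end Matrix

/-- Restricted Cauchy–Schwarz inequality for the semi-norms induced by a
symmetric PSD matrix `L` and its Moore–Penrose pseudo-inverse `L†`: if `u` or
`v` is orthogonal to the nullspace of `L`, then
`|⟨u, v⟩| ≤ √(uᵀ L† u) · √(vᵀ L v)`. -/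
theorem restricted_cauchy_schwarz (d : ℕ)
    (L Ldag : Matrix (Fin d) (Fin d) ℝ)
    (hPSD : L.PosSemidef)
    (hMP1 : L * Ldag * L = L)
    (hMP2 : Ldag * L * Ldag = Ldag)
    (hMP3 : (L * Ldag)ᵀ = L * Ldag)
    (hMP4 : (Ldag * L)ᵀ = Ldag * L)
    (u v : Fin d → ℝ)
    (horth : (∀ w : Fin d → ℝ, L.mulVec w = 0 → u ⬝ᵥ w = 0) ∨
             (∀ w : Fin d → ℝ, L.mulVec w = 0 → v ⬝ᵥ w = 0)) :
    |u ⬝ᵥ v| ≤ Real.sqrt (u ⬝ᵥ Ldag.mulVec u) * Real.sqrt (v ⬝ᵥ L.mulVec v) := by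
  have hMP : L.IsMoorePenroseInverse Ldag := ⟨hMP1, hMP2, hMP3, hMP4⟩
  have hLdag : Ldag.IsSymm := hMP.isSymm (isHermitian_iff_isSymm.mp hPSD.isHermitian)
  have hproj : u ⬝ᵥ v = u ⬝ᵥ (Ldag * L) *ᵥ v := by
    rcases horth with hu | hv
    · rw [← hMP.isSymm_inv_mul.mulVec_dotProduct, hMP.mul_mulVec_eq_self hu]
    · rw [hMP.mul_mulVec_eq_self hv]
  have hpair : u ⬝ᵥ (Ldag * L) *ᵥ v = Ldag *ᵥ u ⬝ᵥ L *ᵥ v := by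
    rw [← mulVec_mulVec, hLdag.mulVec_dotProduct]
  have hnorm : u ⬝ᵥ Ldag *ᵥ u = Ldag *ᵥ u ⬝ᵥ L *ᵥ (Ldag *ᵥ u) := by
    rw [hLdag.mulVec_dotProduct, mulVec_mulVec, mulVec_mulVec, hMP.inv_mul_inv]
  rw [hproj, hpair, hnorm]
  exact hPSD.abs_dotProduct_mulVec_le _ _
end

section
/- For every α ∈ (0, 1/4) and every dimension d ≥ 2, there exists a set of M(α) := ⌊exp((d/2)(log 2 + 2α log(2α) + (1−2α) log(1−2α)))⌋ binary vectors z¹,…,z^{M(α)} ∈ {0,1}^d such that (i) every vector has first coordinate equal to 0, and (ii) for all j ≠ k, αd ≤ ‖zʲ − zᵏ‖₂² ≤ d. -/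
/-!
Identify `{0,1}^n` (`n = d - 1`) with the subsets of `Fin n`, so that Hamming distance becomes
`#(x ∆ y)`. A code of minimum distance `r` that cannot be enlarged covers the cube by its
Hamming balls of radius `r - 1`, all of size `V = ∑_{i < r} (n choose i)`, hence it has at least
`2^n / V` words (Gilbert–Varshamov). For `t ≤ p n` and `p ≤ 1/2` the binomial theorem gives
`V · p^t (1-p)^(n-t) ≤ 1`, while `p^t (1-p)^(n-t) ≥ exp(-n H(p))`, so `V ≤ exp(n H(p))`.
With `p = 2α` and `r = ⌈αd⌉` the code has at least `exp(n (log 2 - H(2α)))` words, which is at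
least the stated `M(α)` because `n ≥ d / 2`. Prepending a zero coordinate turns the code words
into `0/1` vectors whose squared Euclidean distances are their Hamming distances.
-/

open Finset Real
open scoped symmDiff

theorem exists_maximal_separated_finset {X : Type*} [Fintype X] [DecidableEq X]
    (dist : X → X → ℕ) (hcomm : ∀ x y, dist x y = dist y x) (r : ℕ) :
    ∃ S : Finset X, (S : Set X).Pairwise (fun x y => r ≤ dist x y) ∧
      ∀ x ∉ S, ∃ s ∈ S, dist x s < r := by
  obtain ⟨S, hS, hmax⟩ := exists_max_image
    {S : Finset X | (S : Set X).Pairwise (fun x y => r ≤ dist x y)} card ⟨∅, by simp⟩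
  rw [mem_filter_univ] at hS
  refine ⟨S, hS, fun x hx => ?_⟩
  by_contra! hfar
  have hins : ((insert x S : Finset X) : Set X).Pairwise (fun x y => r ≤ dist x y) := by
    rw [coe_insert, Set.pairwise_insert]
    exact ⟨hS, fun s hs _ => ⟨hfar s hs, hcomm s x ▸ hfar s hs⟩⟩
  have := hmax _ ((mem_filter_univ _).2 hins)
  rw [card_insert_of_notMem hx] at this
  omega

theorem exists_separated_card_le_card_mul {X : Type*} [Fintype X] [DecidableEq X]
    (dist : X → X → ℕ) (hcomm : ∀ x y, dist x y = dist y x) (hself : ∀ x, dist x x = 0)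
    {r V : ℕ} (hr : 0 < r) (hV : ∀ x, #{y | dist y x < r} ≤ V) :
    ∃ S : Finset X, (S : Set X).Pairwise (fun x y => r ≤ dist x y) ∧
      Fintype.card X ≤ #S * V := by
  obtain ⟨S, hS, hcover⟩ := exists_maximal_separated_finset dist hcomm r
  refine ⟨S, hS, ?_⟩
  have hsub : univ ⊆ S.biUnion fun s => {y | dist y s < r} := by
    intro x _
    by_cases hx : x ∈ S
    · exact mem_biUnion.2 ⟨x, hx, by simpa [hself] using hr⟩
    · obtain ⟨s, hs, hxs⟩ := hcover x hx
      exact mem_biUnion.2 ⟨s, hs, by simpa using hxs⟩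
  calc Fintype.card X = #(univ : Finset X) := card_univ.symm
    _ ≤ #(S.biUnion fun s => {y | dist y s < r}) := card_le_card hsub
    _ ≤ ∑ s ∈ S, #{y | dist y s < r} := card_biUnion_le
    _ ≤ #S * V := by simpa using sum_le_card_nsmul S _ V fun s _ => hV s

theorem card_filter_card_lt {ι : Type*} [Fintype ι] [DecidableEq ι] (r : ℕ) :
    #{u : Finset ι | #u < r} = ∑ i ∈ range r, (Fintype.card ι).choose i := by
  rw [card_eq_sum_card_fiberwise (f := card) (t := range r) (fun u hu => by simpa using hu)]
  refine sum_congr rfl fun i hi => ?_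
  rw [← card_univ, ← card_powersetCard, powersetCard_eq_filter, powerset_univ, filter_filter]
  congr 1
  ext u
  simp only [mem_filter, mem_univ, true_and]
  constructor
  · exact And.right
  · rintro rfl
    exact ⟨mem_range.1 hi, rfl⟩

theorem card_filter_card_symmDiff_lt {ι : Type*} [Fintype ι] [DecidableEq ι]
    (s : Finset ι) (r : ℕ) :
    #{u : Finset ι | #(u ∆ s) < r} = ∑ i ∈ range r, (Fintype.card ι).choose i := by
  rw [← card_filter_card_lt]
  exact card_nbij' (· ∆ s) (· ∆ s) (fun u hu => by simpa using hu)
    (fun u hu => by simpa using hu) (fun u _ => symmDiff_symmDiff_cancel_right s u)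
    (fun u _ => symmDiff_symmDiff_cancel_right s u)

theorem exists_symmDiff_separated_two_pow_le_card_mul (ι : Type*) [Fintype ι] [DecidableEq ι]
    {r : ℕ} (hr : 0 < r) :
    ∃ S : Finset (Finset ι), (S : Set (Finset ι)).Pairwise (fun x y => r ≤ #(x ∆ y)) ∧
      2 ^ Fintype.card ι ≤ #S * ∑ i ∈ range r, (Fintype.card ι).choose i := by
  simpa only [Fintype.card_finset] using exists_separated_card_le_card_mul
    (fun x y : Finset ι => #(x ∆ y)) (fun x y => by rw [symmDiff_comm]) (by simp) hr
    (fun s => (card_filter_card_symmDiff_lt s r).le)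

theorem sum_choose_mul_pow_mul_pow_le_one {p : ℝ} (hp0 : 0 ≤ p) (hp : p ≤ 1 / 2) {n t : ℕ}
    (htn : t ≤ n) :
    (∑ i ∈ range (t + 1), (n.choose i : ℝ)) * (p ^ t * (1 - p) ^ (n - t)) ≤ 1 := by
  have hq0 : 0 ≤ 1 - p := by linarith
  have hmono : ∀ i ≤ t, p ^ t * (1 - p) ^ (n - t) ≤ p ^ i * (1 - p) ^ (n - i) := by
    intro i hi
    calc p ^ t * (1 - p) ^ (n - t) = p ^ i * p ^ (t - i) * (1 - p) ^ (n - t) := by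
          rw [← pow_add, Nat.add_sub_cancel' hi]
      _ ≤ p ^ i * (1 - p) ^ (t - i) * (1 - p) ^ (n - t) := by
          gcongr
          linarith
      _ = p ^ i * (1 - p) ^ (n - i) := by
          rw [mul_assoc, ← pow_add]
          congr 2
          omega
  calc (∑ i ∈ range (t + 1), (n.choose i : ℝ)) * (p ^ t * (1 - p) ^ (n - t))
      ≤ ∑ i ∈ range (t + 1), p ^ i * (1 - p) ^ (n - i) * n.choose i := by
        rw [sum_mul]
        refine sum_le_sum fun i hi => ?_
        rw [mul_comm]
        exact mul_le_mul_of_nonneg_right (hmono i (Nat.lt_succ_iff.1 (mem_range.1 hi)))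
          (Nat.cast_nonneg _)
    _ ≤ ∑ i ∈ range (n + 1), p ^ i * (1 - p) ^ (n - i) * n.choose i :=
        sum_le_sum_of_subset_of_nonneg (range_subset_range.2 (by omega))
          fun i _ _ => by positivity
    _ = 1 := by rw [← add_pow, add_sub_cancel, one_pow]

theorem exp_neg_mul_binEntropy_le {p : ℝ} (hp0 : 0 < p) (hp : p ≤ 1 / 2) {n t : ℕ}
    (htn : t ≤ n) (ht : t ≤ p * n) :
    exp (-(n * binEntropy p)) ≤ p ^ t * (1 - p) ^ (n - t) := by
  have hq0 : 0 < 1 - p := by linarith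
  have hlog : log p ≤ log (1 - p) := log_le_log hp0 (by linarith)
  have hpow : p ^ t * (1 - p) ^ (n - t) = exp (t * log p + (n - t : ℕ) * log (1 - p)) := by
    rw [exp_add, exp_nat_mul, exp_nat_mul, exp_log hp0, exp_log hq0]
  rw [hpow, exp_le_exp, binEntropy, log_inv, log_inv, Nat.cast_sub htn]
  nlinarith [mul_nonneg (sub_nonneg.2 ht) (sub_nonneg.2 hlog)]

theorem sum_range_choose_le_exp_mul_binEntropy {p : ℝ} (hp0 : 0 < p) (hp : p ≤ 1 / 2)
    {n t : ℕ} (ht : t ≤ p * n) :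
    ∑ i ∈ range (t + 1), (n.choose i : ℝ) ≤ exp (n * binEntropy p) := by
  have htn : t ≤ n := by
    have : (t : ℝ) ≤ n := by nlinarith [(Nat.cast_nonneg n : (0 : ℝ) ≤ n)]
    exact_mod_cast this
  calc ∑ i ∈ range (t + 1), (n.choose i : ℝ)
      = (∑ i ∈ range (t + 1), (n.choose i : ℝ)) * exp (-(n * binEntropy p)) *
          exp (n * binEntropy p) := by
        rw [mul_assoc, ← exp_add, neg_add_cancel, exp_zero, mul_one]
    _ ≤ (∑ i ∈ range (t + 1), (n.choose i : ℝ)) * (p ^ t * (1 - p) ^ (n - t)) *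
          exp (n * binEntropy p) := by
        gcongr
        exact exp_neg_mul_binEntropy_le hp0 hp htn ht
    _ ≤ 1 * exp (n * binEntropy p) := by
        gcongr
        exact sum_choose_mul_pow_mul_pow_le_one hp0.le hp htn
    _ = exp (n * binEntropy p) := one_mul _

theorem exists_symmDiff_separated_exp_le_card (ι : Type*) [Fintype ι] [DecidableEq ι] {p : ℝ}
    (hp0 : 0 < p) (hp : p ≤ 1 / 2) {t : ℕ} (ht : t ≤ p * Fintype.card ι) :
    ∃ S : Finset (Finset ι), (S : Set (Finset ι)).Pairwise (fun x y => t + 1 ≤ #(x ∆ y)) ∧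
      exp (Fintype.card ι * (log 2 - binEntropy p)) ≤ #S := by
  obtain ⟨S, hS, hcard⟩ := exists_symmDiff_separated_two_pow_le_card_mul ι t.succ_pos
  refine ⟨S, hS, ?_⟩
  set V := ∑ i ∈ range (t + 1), (Fintype.card ι).choose i
  have hV : 0 < (V : ℝ) := by
    have := single_le_sum (fun i _ => Nat.zero_le _) (mem_range.2 t.succ_pos)
      (f := fun i => (Fintype.card ι).choose i)
    exact_mod_cast (Nat.choose_zero_right _).symm.trans_le this
  have hvol : (V : ℝ) ≤ exp (Fintype.card ι * binEntropy p) := by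
    simpa only [V, Nat.cast_sum] using sum_range_choose_le_exp_mul_binEntropy hp0 hp ht
  calc exp (Fintype.card ι * (log 2 - binEntropy p))
      = 2 ^ Fintype.card ι / exp (Fintype.card ι * binEntropy p) := by
        rw [mul_sub, exp_sub, exp_nat_mul, exp_log two_pos]
    _ ≤ 2 ^ Fintype.card ι / V := by gcongr
    _ ≤ #S := by
        rw [div_le_iff₀ hV]
        exact_mod_cast hcard

theorem sum_sq_sub_ite_mem_eq_card_symmDiff {ι : Type*} [Fintype ι] [DecidableEq ι]
    (s t : Finset ι) :
    ∑ i, ((if i ∈ s then 1 else 0 : ℝ) - if i ∈ t then 1 else 0) ^ 2 = (#(s ∆ t) : ℝ) := by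
  rw [← filter_univ_mem (s ∆ t), natCast_card_filter]
  refine sum_congr rfl fun i _ => ?_
  by_cases hs : i ∈ s <;> by_cases ht : i ∈ t <;> simp [mem_symmDiff, hs, ht]

theorem exists_binary_vectors_of_separated {n r M : ℕ} {S : Finset (Finset (Fin n))}
    (hS : (S : Set (Finset (Fin n))).Pairwise (fun x y => r ≤ #(x ∆ y))) (hM : M ≤ #S) :
    ∃ z : Fin M → Fin (n + 1) → ℝ,
      (∀ j i, z j i = 0 ∨ z j i = 1) ∧ (∀ j, z j 0 = 0) ∧
      ∀ j k, j ≠ k →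
        (r : ℝ) ≤ ∑ i, (z j i - z k i) ^ 2 ∧ ∑ i, (z j i - z k i) ^ 2 ≤ n := by
  let w : Fin M → Finset (Fin n) := fun j => S.equivFin.symm (Fin.castLE hM j)
  have hwS : ∀ j, w j ∈ S := fun j => (S.equivFin.symm _).2
  have hw : Function.Injective w :=
    Subtype.val_injective.comp (S.equivFin.symm.injective.comp (Fin.castLE_injective hM))
  refine ⟨fun j => Fin.cons (0 : ℝ) fun i => if i ∈ w j then (1 : ℝ) else 0, ?_,
    fun j => rfl, ?_⟩
  · intro j i
    cases i using Fin.cases with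
    | zero => exact Or.inl rfl
    | succ i => by_cases h : i ∈ w j <;> simp [h]
  · intro j k hjk
    simp only [Fin.sum_univ_succ, Fin.cons_zero, Fin.cons_succ, sub_self, zero_pow two_ne_zero,
      zero_add, sum_sq_sub_ite_mem_eq_card_symmDiff]
    refine ⟨mod_cast hS (hwS j) (hwS k) (hw.ne hjk), ?_⟩
    simpa using card_le_univ (w j ∆ w k)

theorem log_two_add_mul_log_add_mul_log_eq (p : ℝ) :
    log 2 + p * log p + (1 - p) * log (1 - p) = log 2 - binEntropy p := by
  rw [binEntropy, log_inv, log_inv]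
  ring

/-- Gilbert–Varshamov-type packing of the Boolean hypercube: for every
`α ∈ (0, 1/4)` and `d ≥ 2`, there exist
`M(α) = ⌊exp((d/2)(log 2 + 2α log(2α) + (1−2α) log(1−2α)))⌋` binary vectors in
`{0,1}^d`, each with first coordinate `0`, whose pairwise squared distances
satisfy `αd ≤ ‖zʲ − zᵏ‖₂² ≤ d`. -/
theorem gilbert_varshamov_packing (α : ℝ) (hα : α ∈ Set.Ioo (0 : ℝ) (1 / 4))
    (d : ℕ) (hd : 2 ≤ d)
    (M : ℕ)
    (hM : M = Nat.floor (Real.exp ((d / 2 : ℝ) *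
      (Real.log 2 + 2 * α * Real.log (2 * α) + (1 - 2 * α) * Real.log (1 - 2 * α))))) :
    ∃ z : Fin M → Fin d → ℝ,
      (∀ (j : Fin M) (i : Fin d), z j i = 0 ∨ z j i = 1) ∧
      (∀ j : Fin M, z j ⟨0, by omega⟩ = 0) ∧
      (∀ j k : Fin M, j ≠ k →
        α * d ≤ ∑ i : Fin d, (z j i - z k i) ^ 2 ∧
        (∑ i : Fin d, (z j i - z k i) ^ 2) ≤ d) := by
  obtain ⟨hα0, hα⟩ := hα
  obtain ⟨n, rfl⟩ : ∃ n, d = n + 1 := ⟨d - 1, by omega⟩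
  have hn : (1 : ℝ) ≤ n := by exact_mod_cast (by omega : 1 ≤ n)
  obtain ⟨t, ht⟩ : ∃ t : ℕ, ⌈α * (n + 1 : ℕ)⌉₊ = t + 1 :=
    ⟨_, (Nat.succ_pred_eq_of_pos (Nat.ceil_pos.2 (by positivity))).symm⟩
  have htα : (t : ℝ) < α * (n + 1) := by
    have := Nat.ceil_lt_add_one (by positivity : 0 ≤ α * (n + 1 : ℕ))
    rw [ht] at this
    push_cast at this
    linarith
  obtain ⟨S, hS, hcard⟩ := exists_symmDiff_separated_exp_le_card (Fin n) (p := 2 * α) (t := t)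
    (by positivity) (by linarith) (by rw [Fintype.card_fin]; nlinarith)
  have hMS : M ≤ #S := by
    have hexp : ((n + 1 : ℕ) : ℝ) / 2 * (log 2 - binEntropy (2 * α))
        ≤ Fintype.card (Fin n) * (log 2 - binEntropy (2 * α)) := by
      rw [Fintype.card_fin]
      gcongr
      · exact sub_nonneg.2 binEntropy_le_log_two
      · push_cast
        linarith
    rw [hM, log_two_add_mul_log_add_mul_log_eq]
    exact_mod_cast (Nat.floor_le (exp_nonneg _)).trans ((exp_le_exp.2 hexp).trans hcard)
  obtain ⟨z, hbin, hzero, hdist⟩ := exists_binary_vectors_of_separated hS hMS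
  refine ⟨z, hbin, hzero, fun j k hjk => ?_⟩
  obtain ⟨hlo, hhi⟩ := hdist j k hjk
  refine ⟨le_trans ?_ hlo, hhi.trans (by simp)⟩
  rw [← ht]
  exact Nat.le_ceil _
end

section
/- Under the ordinal pairwise comparison model with any strictly increasing link F : ℝ → (0,1) with F(x) = 1 − F(−x), if the quality vectors are allowed to range over the entire hyperplane W_∞ = {w ∈ ℝ^d : ⟨1,w⟩ = 0} (no ℓ∞ bound), then the minimax risk in squared ℓ₂ norm (and in squared L semi-norm) is infinite: for any estimator w̃ based on n samples, sup_{w* ∈ W_∞} E‖w̃ − w*‖₂² = ∞. -/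
open Matrix MeasureTheory Finset
open scoped ENNReal

private lemma aux_sup_top {d n : ℕ} (P : (Fin d → ℝ) → Measure (Fin n → Bool))
    (w0 : Fin d → ℝ) (hw0 : (∑ i : Fin d, w0 i) = 0)
    (y0 : Fin n → Bool)
    (hprob : ∀ c : ℝ, 0 ≤ c → (ENNReal.ofReal (1/2))^n ≤ P (c • w0) {y0})
    (err : (Fin n → Bool) → (Fin d → ℝ) → ℝ)
    (herr : ∀ y w, 0 ≤ err y w)
    (hbig : ∀ R : ℝ, ∃ c : ℝ, 0 ≤ c ∧ R ≤ err y0 (c • w0)) :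
    (⨆ (w : Fin d → ℝ) (_ : (∑ i : Fin d, w i) = 0),
        ∫⁻ y, ENNReal.ofReal (err y w) ∂(P w)) = ⊤ := by
  rw [iSup_eq_top]
  intro b hb
  obtain ⟨c, hc, hR⟩ := hbig ((b.toReal + 1) * 2^n)
  refine ⟨c • w0, ?_⟩
  have hcond : (∑ i : Fin d, (c • w0) i) = 0 := by
    simp only [Pi.smul_apply, smul_eq_mul, ← Finset.mul_sum, hw0, mul_zero]
  rw [iSup_pos hcond]
  have h1 := setLIntegral_le_lintegral (μ := P (c • w0)) {y0}
    (fun y => ENNReal.ofReal (err y (c • w0)))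
  rw [lintegral_singleton] at h1
  calc b < ENNReal.ofReal (b.toReal + 1) := by
        rw [ENNReal.lt_ofReal_iff_toReal_lt hb.ne]; linarith
    _ = ENNReal.ofReal ((b.toReal + 1) * 2^n * (1/2)^n) := by
        rw [mul_assoc, ← mul_pow]; norm_num
    _ ≤ ENNReal.ofReal (err y0 (c • w0) * (1/2)^n) :=
        ENNReal.ofReal_le_ofReal (mul_le_mul_of_nonneg_right hR (by positivity))
    _ = ENNReal.ofReal (err y0 (c • w0)) * (ENNReal.ofReal (1/2))^n := by
        rw [ENNReal.ofReal_mul (herr _ _), ENNReal.ofReal_pow (by norm_num)]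
    _ ≤ _ := le_trans (mul_le_mul_right (hprob c hc) _) h1

private lemma aux_quad_form {d n : ℕ} (x : Fin n → Fin d → ℝ) (v : Fin d → ℝ) :
    v ⬝ᵥ (∑ i : Fin n, Matrix.vecMulVec (x i) (x i)).mulVec v = ∑ i : Fin n, (x i ⬝ᵥ v)^2 := by
  have h1 : ∀ j, (∑ i : Fin n, Matrix.vecMulVec (x i) (x i)).mulVec v j
      = ∑ i : Fin n, x i j * (x i ⬝ᵥ v) := by
    intro j
    simp only [Matrix.mulVec, dotProduct, Matrix.sum_apply, Matrix.vecMulVec_apply,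
      Finset.sum_mul, Finset.mul_sum]
    rw [Finset.sum_comm]
    exact Finset.sum_congr rfl fun i _ => Finset.sum_congr rfl fun k _ => by ring
  show ∑ j : Fin d, v j * (∑ i : Fin n, Matrix.vecMulVec (x i) (x i)).mulVec v j = _
  simp only [h1, Finset.mul_sum]
  rw [Finset.sum_comm]
  refine Finset.sum_congr rfl fun i _ => ?_
  have hX : x i ⬝ᵥ v = ∑ j : Fin d, x i j * v j := rfl
  calc ∑ j : Fin d, v j * (x i j * (x i ⬝ᵥ v)) = (∑ j : Fin d, x i j * v j) * (x i ⬝ᵥ v) := by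
        rw [Finset.sum_mul]; exact Finset.sum_congr rfl fun j _ => by ring
    _ = (x i ⬝ᵥ v)^2 := by rw [pow_two, ← hX]

/-- Without an `ℓ∞` bound on the quality score vectors, the minimax risk of
the ordinal pairwise comparison model is infinite: for any estimator `w̃`, the
worst-case expected squared `ℓ₂` error (and likewise the squared `L`
semi-norm error) over the hyperplane `{w : ⟨1,w⟩ = 0}` equals `∞`. Here the
observation distribution `P_w` is the product over the `n` comparisons of the
two-point distribution putting mass `F(⟨xᵢ,w⟩/σ)` on outcome `true`
(item `aᵢ` wins) and the rest on `false`. -/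
theorem minimax_risk_infinite_unbounded (d n : ℕ) (hd : 2 ≤ d) (hn : 0 < n)
    (F : ℝ → ℝ)
    (hrange : ∀ t : ℝ, F t ∈ Set.Ioo (0 : ℝ) 1)
    (hmono : StrictMono F)
    (hsymF : ∀ t : ℝ, F t = 1 - F (-t))
    (σ : ℝ) (hσ : 0 < σ)
    (x : Fin n → Fin d → ℝ)
    (hx : ∀ i : Fin n, ∃ a b : Fin d, a ≠ b ∧ x i a = 1 ∧ x i b = -1 ∧
      ∀ j : Fin d, j ≠ a → j ≠ b → x i j = 0)
    (L : Matrix (Fin d) (Fin d) ℝ)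
    (hL : L = (1 / (n : ℝ)) • ∑ i : Fin n, Matrix.vecMulVec (x i) (x i))
    (P : (Fin d → ℝ) → Measure (Fin n → Bool))
    (hP : P = fun w => Measure.pi (fun i : Fin n =>
      ENNReal.ofReal (F (x i ⬝ᵥ w / σ)) • Measure.dirac true +
        ENNReal.ofReal (1 - F (x i ⬝ᵥ w / σ)) • Measure.dirac false))
    (est : (Fin n → Bool) → (Fin d → ℝ)) (hest : Measurable est) :
    (⨆ (w : Fin d → ℝ) (_ : (∑ i : Fin d, w i) = 0),
        ∫⁻ y, ENNReal.ofReal (∑ i : Fin d, (est y i - w i) ^ 2) ∂(P w)) = ⊤ ∧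
    (⨆ (w : Fin d → ℝ) (_ : (∑ i : Fin d, w i) = 0),
        ∫⁻ y, ENNReal.ofReal ((est y - w) ⬝ᵥ L.mulVec (est y - w)) ∂(P w)) = ⊤ := by
  set i0 : Fin n := ⟨0, hn⟩ with hi0
  obtain ⟨a, b, hab, hxa, hxb, hxo⟩ := hx i0
  set w0 : Fin d → ℝ := fun j => (if j = a then (1:ℝ) else 0) + (if j = b then (-1:ℝ) else 0)
    with hw0def
  have hw0sum : ∑ j : Fin d, w0 j = 0 := by
    simp [hw0def, Finset.sum_add_distrib]
  have hw0a : w0 a = 1 := by simp [hw0def, hab]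
  have ht0 : x i0 ⬝ᵥ w0 = 2 := by
    simp only [dotProduct, hw0def, mul_add, Finset.sum_add_distrib, mul_ite, mul_one,
      mul_neg_one, mul_zero, Finset.sum_ite_eq', Finset.mem_univ, if_true, hxa, hxb]
    norm_num
  set y0 : Fin n → Bool := fun i => decide (0 ≤ x i ⬝ᵥ w0) with hy0def
  have hF0 : F 0 = 1/2 := by have := hsymF 0; rw [neg_zero] at this; linarith
  have hFhalf : ∀ t : ℝ, 0 ≤ t → 1/2 ≤ F t := by
    intro t ht
    rw [← hF0]; exact hmono.monotone ht
  -- probability bound: the fixed outcome `y0` has probability at least `2⁻ⁿ`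
  have hprob : ∀ c : ℝ, 0 ≤ c → (ENNReal.ofReal (1/2))^n ≤ P (c • w0) {y0} := by
    intro c hc
    rw [hP]
    haveI hfin : ∀ i : Fin n, SigmaFinite
        (ENNReal.ofReal (F (x i ⬝ᵥ (c • w0) / σ)) • Measure.dirac true +
          ENNReal.ofReal (1 - F (x i ⬝ᵥ (c • w0) / σ)) • Measure.dirac (false : Bool)) := by
      intro i
      haveI : IsFiniteMeasure
          (ENNReal.ofReal (F (x i ⬝ᵥ (c • w0) / σ)) • Measure.dirac true +
            ENNReal.ofReal (1 - F (x i ⬝ᵥ (c • w0) / σ)) • Measure.dirac (false : Bool)) := by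
        constructor
        simp only [Measure.coe_add, Pi.add_apply, Measure.smul_apply, smul_eq_mul,
          MeasureTheory.measure_univ, mul_one]
        exact ENNReal.add_lt_top.mpr ⟨ENNReal.ofReal_lt_top, ENNReal.ofReal_lt_top⟩
      infer_instance
    have hsingle : ({y0} : Set (Fin n → Bool)) = Set.pi Set.univ (fun i => {y0 i}) :=
      (Set.univ_pi_singleton y0).symm
    rw [hsingle, Measure.pi_pi]
    rw [show (ENNReal.ofReal (1/2))^n = ∏ _i : Fin n, ENNReal.ofReal (1/2) by
      rw [Finset.prod_const, Finset.card_univ, Fintype.card_fin]]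
    refine Finset.prod_le_prod' ?_
    intro i _
    have hdot : x i ⬝ᵥ (c • w0) = c * (x i ⬝ᵥ w0) := by
      rw [dotProduct_smul]; simp
    by_cases h : 0 ≤ x i ⬝ᵥ w0
    · have hy : y0 i = true := by simp [hy0def, h]
      rw [hy]
      have heval : (ENNReal.ofReal (F (x i ⬝ᵥ (c • w0) / σ)) • Measure.dirac true +
          ENNReal.ofReal (1 - F (x i ⬝ᵥ (c • w0) / σ)) • Measure.dirac false)
          ({true} : Set Bool) = ENNReal.ofReal (F (x i ⬝ᵥ (c • w0) / σ)) := by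
        simp [Measure.dirac_apply]
      rw [heval]
      refine ENNReal.ofReal_le_ofReal (hFhalf _ ?_)
      rw [hdot]
      exact div_nonneg (mul_nonneg hc h) hσ.le
    · have hy : y0 i = false := by simp [hy0def, h]
      rw [hy]
      have heval : (ENNReal.ofReal (F (x i ⬝ᵥ (c • w0) / σ)) • Measure.dirac true +
          ENNReal.ofReal (1 - F (x i ⬝ᵥ (c • w0) / σ)) • Measure.dirac false)
          ({false} : Set Bool) = ENNReal.ofReal (1 - F (x i ⬝ᵥ (c • w0) / σ)) := by
        simp [Measure.dirac_apply]
      rw [heval]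
      refine ENNReal.ofReal_le_ofReal ?_
      have hneg : 1 - F (x i ⬝ᵥ (c • w0) / σ) = F (-(x i ⬝ᵥ (c • w0) / σ)) := by
        have := hsymF (-(x i ⬝ᵥ (c • w0) / σ)); rw [neg_neg] at this; linarith
      rw [hneg]
      refine hFhalf _ ?_
      rw [hdot, ← neg_div]
      push_neg at h
      exact div_nonneg (by nlinarith) hσ.le
  constructor
  · refine aux_sup_top P w0 hw0sum y0 hprob _ (fun y w => by positivity) ?_
    intro R
    refine ⟨max (est y0 a) 0 + Real.sqrt (max R 0), by positivity, ?_⟩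
    set c := max (est y0 a) 0 + Real.sqrt (max R 0) with hcdef
    have hterm : (est y0 a - (c • w0) a) ^ 2 ≤
        ∑ i : Fin d, (est y0 i - (c • w0) i) ^ 2 :=
      Finset.single_le_sum (f := fun i => (est y0 i - (c • w0) i) ^ 2)
        (fun i _ => sq_nonneg _) (Finset.mem_univ a)
    refine le_trans ?_ hterm
    have hcw : (c • w0) a = c := by simp [hw0a]
    rw [hcw]
    have hu : (0:ℝ) ≤ max (est y0 a) 0 - est y0 a := by
      have := le_max_left (est y0 a) 0; linarith
    nlinarith [Real.sq_sqrt (le_max_right R 0), Real.sqrt_nonneg (max R 0),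
      le_max_left R 0, le_max_right R 0,
      mul_nonneg hu (Real.sqrt_nonneg (max R 0)), sq_nonneg (max (est y0 a) 0 - est y0 a)]
  · have hquad : ∀ v : Fin d → ℝ,
        v ⬝ᵥ L.mulVec v = (1 / (n : ℝ)) * ∑ i : Fin n, (x i ⬝ᵥ v)^2 := by
      intro v
      rw [hL, Matrix.smul_mulVec, dotProduct_smul, smul_eq_mul, aux_quad_form]
    refine aux_sup_top P w0 hw0sum y0 hprob _ (fun y w => by rw [hquad]; positivity) ?_
    intro R
    set s := x i0 ⬝ᵥ est y0 with hsdef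
    refine ⟨max (s/2) 0 + Real.sqrt (max ((n:ℝ) * R) 0), by positivity, ?_⟩
    set c := max (s/2) 0 + Real.sqrt (max ((n:ℝ) * R) 0) with hcdef
    rw [hquad]
    have hterm : (x i0 ⬝ᵥ (est y0 - c • w0)) ^ 2 ≤
        ∑ i : Fin n, (x i ⬝ᵥ (est y0 - c • w0)) ^ 2 :=
      Finset.single_le_sum (f := fun i => (x i ⬝ᵥ (est y0 - c • w0)) ^ 2)
        (fun i _ => sq_nonneg _) (Finset.mem_univ i0)
    have hdot2 : x i0 ⬝ᵥ (est y0 - c • w0) = s - 2 * c := by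
      rw [dotProduct_sub, dotProduct_smul, smul_eq_mul, ht0, ← hsdef]; ring
    have hnpos : (0:ℝ) < (n:ℝ) := by exact_mod_cast hn
    have hu : (0:ℝ) ≤ 2 * max (s/2) 0 - s := by
      have := le_max_left (s/2) 0; linarith
    have key : (n:ℝ) * R ≤ (s - 2*c)^2 := by
      rw [hcdef]
      nlinarith [Real.sq_sqrt (le_max_right ((n:ℝ)*R) 0),
        Real.sqrt_nonneg (max ((n:ℝ)*R) 0),
        le_max_left ((n:ℝ)*R) 0, le_max_right ((n:ℝ)*R) 0,
        mul_nonneg hu (Real.sqrt_nonneg (max ((n:ℝ)*R) 0)),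
        sq_nonneg (2 * max (s/2) 0 - s)]
    calc R = (1/(n:ℝ)) * ((n:ℝ) * R) := by field_simp
      _ ≤ (1/(n:ℝ)) * (x i0 ⬝ᵥ (est y0 - c • w0))^2 := by
          rw [hdot2]; exact mul_le_mul_of_nonneg_left key (by positivity)
      _ ≤ _ := mul_le_mul_of_nonneg_left hterm (by positivity)
end
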